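/- (Euclidean analogue of the quantitative bound in Theorem 1.) Let f : ℝ^d → ℝ be μ-strongly convex (μ > 0), let g : ℝ^d → ℝ be convex and Lipschitz with constant L, and let α > 0, λ > 0. Suppose x* minimizes f + α·g over ℝ^d and x^λ minimizes f + α·g^λ over ℝ^d, where g^λ is the Moreau–Yoshida envelope of g. Then ‖x^λ − x*‖² ≤ α·λ·L²/(2μ). In particular x^λ → x* as λ → 0⁺. -/

import Mathlib

/-! The envelope is sandwiched between `g - λL²/2` and `g`, and is convex as a partial
infimum of the jointly convex function `(x, y) ↦ g y + ‖x - y‖² / (2λ)`. Adding the quadratic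
growth of the `μ`-strongly convex functions `f + α g` and `f + α g^λ` at their minimizers
`x*` and `x^λ` gives `μ ‖x^λ - x*‖² ≤ α (g - g^λ)(x^λ) + α (g^λ - g)(x*) ≤ α λ L² / 2`. -/

/-- The Moreau–Yoshida envelope of `g` with scaling parameter `lam`:
`g^lam(x) = inf_y ( g(y) + ‖x − y‖² / (2 lam) )`. -/
noncomputable def moreauEnv {d : ℕ} (g : EuclideanSpace ℝ (Fin d) → ℝ) (lam : ℝ)
    (x : EuclideanSpace ℝ (Fin d)) : ℝ :=
  ⨅ y : EuclideanSpace ℝ (Fin d), (g y + ‖x - y‖ ^ 2 / (2 * lam))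

open Set Filter Topology

section PartialInfimum

variable {E F : Type*} [AddCommGroup E] [Module ℝ E] [AddCommGroup F] [Module ℝ F]

theorem ConvexOn.ciInf_snd {G : E × F → ℝ} (hG : ConvexOn ℝ univ G)
    (hbdd : ∀ x, BddBelow (range fun y => G (x, y))) :
    ConvexOn ℝ univ fun x => ⨅ y, G (x, y) := by
  refine ⟨convex_univ, fun x _ x' _ a b ha hb hab => ?_⟩
  simp only [smul_eq_mul, Real.mul_iInf_of_nonneg ha, Real.mul_iInf_of_nonneg hb]
  refine le_ciInf_add_ciInf fun y y' => ?_
  calc ⨅ z, G (a • x + b • x', z) ≤ G (a • x + b • x', a • y + b • y') := ciInf_le (hbdd _) _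
    _ = G (a • (x, y) + b • (x', y')) := rfl
    _ ≤ a * G (x, y) + b * G (x', y') := hG.2 trivial trivial ha hb hab

end PartialInfimum

section StrongConvexity

variable {E : Type*} [NormedAddCommGroup E] [NormedSpace ℝ E] {s : Set E} {f g : E → ℝ}

theorem StrongConvexOn.add_convexOn {m : ℝ} (hf : StrongConvexOn s m f) (hg : ConvexOn ℝ s g) :
    StrongConvexOn s m (f + g) := by
  have := hf.add (uniformConvexOn_zero.2 hg)
  rwa [add_zero] at this

theorem strongConvexOn_univ_of_forall_le {m : ℝ}
    (hf : ∀ y z : E, ∀ t : ℝ, 0 ≤ t → t ≤ 1 →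
      f (t • y + (1 - t) • z) ≤ t * f y + (1 - t) * f z - m / 2 * (t * (1 - t) * ‖y - z‖ ^ 2)) :
    StrongConvexOn univ m f := by
  refine ⟨convex_univ, fun y _ z _ a b ha hb hab => ?_⟩
  obtain rfl : b = 1 - a := by linarith
  linear_combination hf y z a ha (by linarith)

theorem UniformConvexOn.add_le_of_isMinOn {φ : ℝ → ℝ} {x y : E} (hf : UniformConvexOn s φ f)
    (hmin : IsMinOn f s x) (hx : x ∈ s) (hy : y ∈ s) :
    f x + φ ‖y - x‖ ≤ f y := by
  have hseg : ∀ b ∈ Ioo (0 : ℝ) 1, b * φ ‖y - x‖ ≤ f y - f x := by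
    rintro b ⟨hb0, hb1⟩
    have hconv := hf.2 hy hx (sub_pos.2 hb1).le hb0.le (sub_add_cancel 1 b)
    have hle : f x ≤ f _ := hmin (hf.1 hy hx (sub_pos.2 hb1).le hb0.le (sub_add_cancel 1 b))
    simp only [smul_eq_mul] at hconv
    have : (1 - b) * (b * φ ‖y - x‖) ≤ (1 - b) * (f y - f x) := by linarith
    exact le_of_mul_le_mul_left this (sub_pos.2 hb1)
  have hlim : Tendsto (fun b : ℝ => b * φ ‖y - x‖) (𝓝[<] 1) (𝓝 (φ ‖y - x‖)) := by
    simpa using ((continuous_mul_const (φ ‖y - x‖)).tendsto 1).mono_left nhdsWithin_le_nhds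
  have := le_of_tendsto hlim (eventually_of_mem (Ioo_mem_nhdsLT zero_lt_one) hseg)
  linarith

end StrongConvexity

theorem tendsto_nhdsGT_of_norm_sub_sq_le {E : Type*} [SeminormedAddCommGroup E] {u : ℝ → E}
    {a : E} {C : ℝ} (h : ∀ t, 0 < t → ‖u t - a‖ ^ 2 ≤ C * t) :
    Tendsto u (𝓝[>] 0) (𝓝 a) := by
  rw [tendsto_iff_norm_sub_tendsto_zero]
  refine squeeze_zero' (Eventually.of_forall fun _ => norm_nonneg _)
    (eventually_nhdsWithin_of_forall fun t ht => ?_) (g := fun t => √(C * t)) ?_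
  · simpa using Real.abs_le_sqrt (h t ht)
  · simpa using ((continuous_const.mul continuous_id).sqrt.tendsto (0 : ℝ)).mono_left
      nhdsWithin_le_nhds

section MoreauEnvelope

variable {d : ℕ} {g : EuclideanSpace ℝ (Fin d) → ℝ} {L lam : ℝ}

theorem sub_le_add_norm_sub_sq_div (hgL : ∀ x y, g x - g y ≤ L * ‖x - y‖) (hlam : 0 < lam)
    (x y : EuclideanSpace ℝ (Fin d)) :
    g x - lam * L ^ 2 / 2 ≤ g y + ‖x - y‖ ^ 2 / (2 * lam) := by
  have hamgm : L * ‖x - y‖ ≤ lam * L ^ 2 / 2 + ‖x - y‖ ^ 2 / (2 * lam) := by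
    have hsq : 0 ≤ (lam * L - ‖x - y‖) ^ 2 / (2 * lam) := by positivity
    have hexp : (lam * L - ‖x - y‖) ^ 2 / (2 * lam)
        = lam * L ^ 2 / 2 - L * ‖x - y‖ + ‖x - y‖ ^ 2 / (2 * lam) := by
      field_simp; ring
    linarith
  linarith [hgL x y]

theorem bddBelow_range_moreauEnv (hgL : ∀ x y, g x - g y ≤ L * ‖x - y‖) (hlam : 0 < lam)
    (x : EuclideanSpace ℝ (Fin d)) :
    BddBelow (range fun y => g y + ‖x - y‖ ^ 2 / (2 * lam)) :=
  ⟨g x - lam * L ^ 2 / 2, forall_mem_range.2 (sub_le_add_norm_sub_sq_div hgL hlam x)⟩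

theorem moreauEnv_le (hgL : ∀ x y, g x - g y ≤ L * ‖x - y‖) (hlam : 0 < lam)
    (x : EuclideanSpace ℝ (Fin d)) :
    moreauEnv g lam x ≤ g x := by
  simpa [moreauEnv] using ciInf_le (bddBelow_range_moreauEnv hgL hlam x) x

theorem sub_le_moreauEnv (hgL : ∀ x y, g x - g y ≤ L * ‖x - y‖) (hlam : 0 < lam)
    (x : EuclideanSpace ℝ (Fin d)) :
    g x - lam * L ^ 2 / 2 ≤ moreauEnv g lam x :=
  le_ciInf (sub_le_add_norm_sub_sq_div hgL hlam x)

theorem convexOn_moreauEnv (hg : ConvexOn ℝ univ g) (hgL : ∀ x y, g x - g y ≤ L * ‖x - y‖)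
    (hlam : 0 < lam) :
    ConvexOn ℝ univ (moreauEnv g lam) := by
  have hsq : ConvexOn ℝ univ fun p : EuclideanSpace ℝ (Fin d) × EuclideanSpace ℝ (Fin d) =>
      ‖p.1 - p.2‖ ^ 2 / (2 * lam) := by
    have hnormSq := (convexOn_norm convex_univ).pow
      (fun (v : EuclideanSpace ℝ (Fin d)) _ => norm_nonneg v) 2
    have := hnormSq.comp_linearMap (LinearMap.fst ℝ _ _ - LinearMap.snd ℝ _ _)
    simpa [div_eq_inv_mul] using this.smul (inv_nonneg.2 (by positivity : (0 : ℝ) ≤ 2 * lam))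
  exact ((hg.comp_linearMap (LinearMap.snd ℝ _ _)).add hsq).ciInf_snd
    (bddBelow_range_moreauEnv hgL hlam)

end MoreauEnvelope

/-- Euclidean analogue of the quantitative bound in Theorem 1: if `f` is `μ`-strongly
convex (`μ > 0`), `g` is convex and `L`-Lipschitz, `α > 0`, `x*` minimizes `f + α g`,
and for each `lam > 0` the point `x^lam` minimizes `f + α g^lam`, then
`‖x^lam − x*‖² ≤ α lam L² / (2 μ)` for every `lam > 0`; in particular `x^lam → x*` as
`lam → 0⁺`. -/
theorem moreau_approx_minimizer_quantitative {d : ℕ}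
    (f g : EuclideanSpace ℝ (Fin d) → ℝ) (μ α L : ℝ)
    (hμ : 0 < μ) (hα : 0 < α)
    (hf : ∀ y z : EuclideanSpace ℝ (Fin d), ∀ t : ℝ, 0 ≤ t → t ≤ 1 →
      f (t • y + (1 - t) • z) ≤
        t * f y + (1 - t) * f z - μ / 2 * (t * (1 - t) * ‖y - z‖ ^ 2))
    (hg : ConvexOn ℝ Set.univ g)
    (hgL : ∀ x y : EuclideanSpace ℝ (Fin d), |g x - g y| ≤ L * ‖x - y‖)
    (xstar : EuclideanSpace ℝ (Fin d))
    (hxstar : ∀ y : EuclideanSpace ℝ (Fin d), f xstar + α * g xstar ≤ f y + α * g y)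
    (xlam : ℝ → EuclideanSpace ℝ (Fin d))
    (hxlam : ∀ lam : ℝ, 0 < lam → ∀ y : EuclideanSpace ℝ (Fin d),
      f (xlam lam) + α * moreauEnv g lam (xlam lam) ≤ f y + α * moreauEnv g lam y) :
    (∀ lam : ℝ, 0 < lam → ‖xlam lam - xstar‖ ^ 2 ≤ α * lam * L ^ 2 / (2 * μ)) ∧
      Filter.Tendsto xlam (nhdsWithin 0 (Set.Ioi 0)) (nhds xstar) := by
  have hgL' : ∀ x y, g x - g y ≤ L * ‖x - y‖ := fun x y => (abs_le.1 (hgL x y)).2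
  have hfμ : StrongConvexOn univ μ f := strongConvexOn_univ_of_forall_le hf
  have hbound : ∀ lam, 0 < lam → ‖xlam lam - xstar‖ ^ 2 ≤ α * lam * L ^ 2 / (2 * μ) := by
    intro lam hlam
    have hgrowth := (hfμ.add_convexOn (hg.smul hα.le)).add_le_of_isMinOn
      (isMinOn_univ_iff.2 hxstar) (mem_univ _) (mem_univ (xlam lam))
    have hgrowthEnv := (hfμ.add_convexOn ((convexOn_moreauEnv hg hgL' hlam).smul hα.le))
      |>.add_le_of_isMinOn (isMinOn_univ_iff.2 (hxlam lam hlam)) (mem_univ _) (mem_univ xstar)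
    have hlower := mul_le_mul_of_nonneg_left (sub_le_moreauEnv hgL' hlam (xlam lam)) hα.le
    have hupper := mul_le_mul_of_nonneg_left (moreauEnv_le hgL' hlam xstar) hα.le
    simp only [Pi.add_apply, smul_eq_mul, norm_sub_rev xstar] at hgrowth hgrowthEnv
    rw [le_div_iff₀ (by positivity)]
    linarith
  exact ⟨hbound, tendsto_nhdsGT_of_norm_sub_sq_le (C := α * L ^ 2 / (2 * μ)) fun lam hlam =>
    (hbound lam hlam).trans_eq (by ring)⟩
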